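/- arXiv:1803.08449 — 5 statements merged into one kernel-verified Lean document; each statement's English description precedes it below -/
import Mathlib

section
/- The minimizer of the constrained problem is unique: if θ ∈ ℝⁿ satisfies E θ = 0 and (θ̂ − θ)ᵀ Σ⁻¹ (θ̂ − θ) = (θ̂ − θ̃)ᵀ Σ⁻¹ (θ̂ − θ̃), where θ̃ = θ̂ − Σ Eᵀ Σ₁₁⁻¹ E θ̂, then θ = θ̃. -/
open Matrix

/-- The `p × (p+q)` matrix `E = [I_p 0]` selecting the first `p` coordinates. -/
def Emat (p q : ℕ) : Matrix (Fin p) (Fin p ⊕ Fin q) ℝ :=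
  Matrix.fromCols 1 0

/-- The refined estimate `θ̃ = θ̂ − Σ Eᵀ Σ₁₁⁻¹ E θ̂`, where `Σ₁₁` is the
top-left `p × p` block of `Σ`. -/
noncomputable def refined {p q : ℕ} (S : Matrix (Fin p ⊕ Fin q) (Fin p ⊕ Fin q) ℝ)
    (θhat : Fin p ⊕ Fin q → ℝ) : Fin p ⊕ Fin q → ℝ :=
  θhat - (S * (Emat p q)ᵀ * (S.toBlocks₁₁)⁻¹ * Emat p q) *ᵥ θhat

/-! `θ̂ − θ̃ = Σ Eᵀ w` with `w = Σ₁₁⁻¹ E θ̂`, so `Σ⁻¹ (θ̂ − θ̃) = Eᵀ w` is orthogonal to `ker E`,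
and `E θ̃ = E θ̂ − (E Σ Eᵀ) Σ₁₁⁻¹ E θ̂ = 0` because `E Σ Eᵀ = Σ₁₁`. Hence for `θ ∈ ker E` the
difference `θ̃ − θ` lies in `ker E`, and Pythagoras for the inner product `Σ⁻¹` gives
`‖θ̂ − θ‖² = ‖θ̂ − θ̃‖² + ‖θ̃ − θ‖²`; equality of the first two forces `θ = θ̃`. -/

theorem Matrix.PosDef.eq_zero_of_dotProduct_mulVec_add_eq {n : Type*} [Fintype n]
    {A : Matrix n n ℝ} (hA : A.PosDef) {u d : n → ℝ} (horth : d ⬝ᵥ (A *ᵥ u) = 0)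
    (h : (u + d) ⬝ᵥ (A *ᵥ (u + d)) = u ⬝ᵥ (A *ᵥ u)) : d = 0 := by
  have hsymm : u ⬝ᵥ (A *ᵥ d) = d ⬝ᵥ (A *ᵥ u) := by
    rw [dotProduct_mulVec, ← mulVec_transpose, ← conjTranspose_eq_transpose_of_trivial,
      hA.isHermitian.eq, dotProduct_comm]
  have hquad : d ⬝ᵥ (A *ᵥ d) = 0 := by
    rw [mulVec_add, add_dotProduct, dotProduct_add, dotProduct_add, hsymm, horth] at h
    linarith
  by_contra hd
  simpa [hquad] using hA.dotProduct_mulVec_pos hd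

theorem Matrix.PosDef.toBlocks₁₁ {m n R : Type*} [Ring R] [PartialOrder R] [StarRing R]
    {S : Matrix (m ⊕ n) (m ⊕ n) R} (hS : S.PosDef) : S.toBlocks₁₁.PosDef :=
  hS.submatrix Sum.inl_injective

theorem Emat_mul_mul_transpose {p q : ℕ} (S : Matrix (Fin p ⊕ Fin q) (Fin p ⊕ Fin q) ℝ) :
    Emat p q * S * (Emat p q)ᵀ = S.toBlocks₁₁ := by
  rw [← fromBlocks_toBlocks S, Emat, fromCols_mul_fromBlocks, transpose_fromCols,
    fromCols_mul_fromRows]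
  simp

theorem dotProduct_transpose_mulVec_of_mulVec_eq_zero {m n R : Type*} [Fintype m] [Fintype n]
    [CommSemiring R] {E : Matrix m n R} {d : n → R} (hd : E *ᵥ d = 0) (w : m → R) :
    d ⬝ᵥ (Eᵀ *ᵥ w) = 0 := by
  rw [dotProduct_mulVec, vecMul_transpose, hd, zero_dotProduct]

theorem inv_mulVec_sub_refined {p q : ℕ} {S : Matrix (Fin p ⊕ Fin q) (Fin p ⊕ Fin q) ℝ}
    (hS : IsUnit S.det) (θhat : Fin p ⊕ Fin q → ℝ) :
    S⁻¹ *ᵥ (θhat - refined S θhat) =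
      (Emat p q)ᵀ *ᵥ (S.toBlocks₁₁⁻¹ *ᵥ (Emat p q *ᵥ θhat)) := by
  rw [refined, sub_sub_cancel, mulVec_mulVec, Matrix.mul_assoc, Matrix.mul_assoc,
    ← Matrix.mul_assoc S⁻¹, nonsing_inv_mul S hS, Matrix.one_mul, ← mulVec_mulVec,
    ← mulVec_mulVec]

theorem Emat_mulVec_refined {p q : ℕ} {S : Matrix (Fin p ⊕ Fin q) (Fin p ⊕ Fin q) ℝ}
    (hS : IsUnit S.toBlocks₁₁.det) (θhat : Fin p ⊕ Fin q → ℝ) :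
    Emat p q *ᵥ refined S θhat = 0 := by
  rw [refined, mulVec_sub, mulVec_mulVec, ← Matrix.mul_assoc, ← Matrix.mul_assoc,
    ← Matrix.mul_assoc (Emat p q), Emat_mul_mul_transpose, mul_nonsing_inv _ hS, Matrix.one_mul,
    sub_self]

theorem refined_unique_minimizer_general (p q : ℕ)
    (S : Matrix (Fin p ⊕ Fin q) (Fin p ⊕ Fin q) ℝ) (hS : S.PosDef)
    (θhat θ : Fin p ⊕ Fin q → ℝ)
    (hθ : Emat p q *ᵥ θ = 0)
    (heq : (θhat - θ) ⬝ᵥ (S⁻¹ *ᵥ (θhat - θ)) =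
      (θhat - refined S θhat) ⬝ᵥ (S⁻¹ *ᵥ (θhat - refined S θhat))) :
    θ = refined S θhat := by
  have hEd : Emat p q *ᵥ (refined S θhat - θ) = 0 := by
    rw [mulVec_sub, Emat_mulVec_refined hS.toBlocks₁₁.det_pos.ne'.isUnit, hθ, sub_self]
  have horth : (refined S θhat - θ) ⬝ᵥ (S⁻¹ *ᵥ (θhat - refined S θhat)) = 0 := by
    rw [inv_mulVec_sub_refined hS.det_pos.ne'.isUnit]
    exact dotProduct_transpose_mulVec_of_mulVec_eq_zero hEd _
  rw [← sub_add_sub_cancel θhat (refined S θhat) θ] at heq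
  exact (sub_eq_zero.mp (hS.inv.eq_zero_of_dotProduct_mulVec_add_eq horth heq)).symm

/-- Uniqueness of the constrained minimizer: if `E θ = 0` and the quadratic form
`(θ̂ − θ)ᵀ Σ⁻¹ (θ̂ − θ)` attains the value achieved by `θ̃`, then `θ = θ̃`. -/
theorem refined_unique_minimizer (p q : ℕ) (hp : 0 < p) (hq : 0 < q)
    (S : Matrix (Fin p ⊕ Fin q) (Fin p ⊕ Fin q) ℝ) (hS : S.PosDef)
    (θhat θ : Fin p ⊕ Fin q → ℝ)
    (hθ : Emat p q *ᵥ θ = 0)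
    (heq : (θhat - θ) ⬝ᵥ (S⁻¹ *ᵥ (θhat - θ)) =
      (θhat - refined S θhat) ⬝ᵥ (S⁻¹ *ᵥ (θhat - refined S θhat))) :
    θ = refined S θhat :=
  refined_unique_minimizer_general p q S hS θhat θ hθ heq
end

section
/- Cholesky form of the refined estimator: for every θ̂ ∈ ℝⁿ, θ̂ − Σ Eᵀ Σ₁₁⁻¹ E θ̂ = C D C⁻¹ θ̂, where Σ = C Cᵀ, Σ₁₁ = C₁₁ C₁₁ᵀ is the top-left p×p block of Σ, E = [I_p 0], D = [[0,0],[0,I_q]]. -/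
open Matrix

/-- The block diagonal matrix `D = [[0,0],[0,I_q]]`. -/
def Dmat (p q : ℕ) : Matrix (Fin p ⊕ Fin q) (Fin p ⊕ Fin q) ℝ :=
  Matrix.fromBlocks 0 0 0 1

/-- The block lower triangular matrix `C = [[C₁₁,0],[C₂₁,C₂₂]]`. -/
def Cmat {p q : ℕ} (C₁₁ : Matrix (Fin p) (Fin p) ℝ) (C₂₁ : Matrix (Fin q) (Fin p) ℝ)
    (C₂₂ : Matrix (Fin q) (Fin q) ℝ) : Matrix (Fin p ⊕ Fin q) (Fin p ⊕ Fin q) ℝ :=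
  Matrix.fromBlocks C₁₁ 0 C₂₁ C₂₂

/-!
Write `Σ = C Cᵀ`. Block lower triangularity of `C` says exactly `E C = C₁₁ E`, hence
`Cᵀ Eᵀ = Eᵀ C₁₁ᵀ` and `E C⁻¹ = C₁₁⁻¹ E`. So `Σ₁₁ = E Σ Eᵀ = C₁₁ C₁₁ᵀ`, and
`Σ Eᵀ Σ₁₁⁻¹ E = C Eᵀ C₁₁⁻¹ E = C Eᵀ E C⁻¹ = C (I - D) C⁻¹ = I - C D C⁻¹`.
-/

namespace Matrix

variable {m n R : Type*} [Fintype m] [DecidableEq m] [CommRing R]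

theorem fromCols_one_zero_mul_transpose [Fintype n] :
    fromCols (1 : Matrix m m R) (0 : Matrix m n R) *
      (fromCols (1 : Matrix m m R) (0 : Matrix m n R))ᵀ = 1 := by
  rw [transpose_fromCols, fromCols_mul_fromRows]
  simp

theorem transpose_fromCols_one_zero_mul [DecidableEq n] :
    (fromCols (1 : Matrix m m R) (0 : Matrix m n R))ᵀ *
      fromCols (1 : Matrix m m R) (0 : Matrix m n R) =
      (1 : Matrix (m ⊕ n) (m ⊕ n) R) - fromBlocks 0 0 0 1 := by
  rw [eq_sub_iff_add_eq, ← fromBlocks_one, transpose_fromCols, fromRows_mul_fromCols,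
    fromBlocks_add]
  simp

theorem fromCols_one_zero_mul_fromBlocks_zero₁₂ [Fintype n] (A : Matrix m m R) (B : Matrix n m R)
    (D : Matrix n n R) :
    fromCols (1 : Matrix m m R) (0 : Matrix m n R) * fromBlocks A 0 B D =
      A * fromCols (1 : Matrix m m R) (0 : Matrix m n R) := by
  rw [fromCols_mul_fromBlocks, mul_fromCols]
  simp

theorem toBlocks₁₁_eq_fromCols_mul_mul_transpose [Fintype n] (M : Matrix (m ⊕ n) (m ⊕ n) R) :
    M.toBlocks₁₁ = fromCols (1 : Matrix m m R) (0 : Matrix m n R) * M *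
      (fromCols (1 : Matrix m m R) (0 : Matrix m n R))ᵀ := by
  conv_rhs => rw [← fromBlocks_toBlocks M]
  rw [fromCols_mul_fromBlocks, transpose_fromCols, fromCols_mul_fromRows]
  simp

theorem mul_transpose_mul_transpose_mul_inv_mul_eq [Fintype n] [DecidableEq n]
    (C : Matrix n n R) (A : Matrix m m R) (E : Matrix m n R) (hC : IsUnit C.det)
    (hA : IsUnit A.det) (hE : E * Eᵀ = 1) (hEC : E * C = A * E) :
    C * Cᵀ * Eᵀ * (E * (C * Cᵀ) * Eᵀ)⁻¹ * E = C * Eᵀ * E * C⁻¹ := by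
  have hCE : Cᵀ * Eᵀ = Eᵀ * Aᵀ := by rw [← transpose_mul, hEC, transpose_mul]
  have hAE : A⁻¹ * E = E * C⁻¹ := calc
    A⁻¹ * E = A⁻¹ * (E * C) * C⁻¹ := by
      rw [Matrix.mul_assoc, Matrix.mul_assoc, mul_nonsing_inv _ hC, Matrix.mul_one]
    _ = E * C⁻¹ := by rw [hEC, ← Matrix.mul_assoc, nonsing_inv_mul _ hA, Matrix.one_mul]
  have hblock : E * (C * Cᵀ) * Eᵀ = A * Aᵀ := by
    rw [← Matrix.mul_assoc, hEC, Matrix.mul_assoc, Matrix.mul_assoc, hCE, ← Matrix.mul_assoc E, hE,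
      Matrix.one_mul]
  calc C * Cᵀ * Eᵀ * (E * (C * Cᵀ) * Eᵀ)⁻¹ * E
      = C * Eᵀ * (Aᵀ * Aᵀ⁻¹) * (A⁻¹ * E) := by
        rw [hblock, mul_inv_rev, Matrix.mul_assoc C, hCE]
        simp only [Matrix.mul_assoc]
    _ = C * Eᵀ * E * C⁻¹ := by
        rw [mul_nonsing_inv _ (by rwa [det_transpose]), Matrix.mul_one, hAE]
        simp only [Matrix.mul_assoc]

end Matrix

theorem refined_eq_cholesky_form_general (p q : ℕ)
    (C₁₁ : Matrix (Fin p) (Fin p) ℝ) (C₂₁ : Matrix (Fin q) (Fin p) ℝ)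
    (C₂₂ : Matrix (Fin q) (Fin q) ℝ)
    (hC₁₁ : IsUnit C₁₁.det) (hC₂₂ : IsUnit C₂₂.det)
    (θhat : Fin p ⊕ Fin q → ℝ) :
    θhat - (Cmat C₁₁ C₂₁ C₂₂ * (Cmat C₁₁ C₂₁ C₂₂)ᵀ * (Emat p q)ᵀ *
        ((Cmat C₁₁ C₂₁ C₂₂ * (Cmat C₁₁ C₂₁ C₂₂)ᵀ).toBlocks₁₁)⁻¹ * Emat p q) *ᵥ θhat =
      (Cmat C₁₁ C₂₁ C₂₂ * Dmat p q * (Cmat C₁₁ C₂₁ C₂₂)⁻¹) *ᵥ θhat := by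
  set C := Cmat C₁₁ C₂₁ C₂₂
  have hC : IsUnit C.det := det_fromBlocks_zero₁₂ C₁₁ C₂₁ C₂₂ ▸ hC₁₁.mul hC₂₂
  have hE : Emat p q * (Emat p q)ᵀ = 1 := fromCols_one_zero_mul_transpose
  have hEC : Emat p q * C = C₁₁ * Emat p q := fromCols_one_zero_mul_fromBlocks_zero₁₂ _ _ _
  have hblock : (C * Cᵀ).toBlocks₁₁ = Emat p q * (C * Cᵀ) * (Emat p q)ᵀ :=
    toBlocks₁₁_eq_fromCols_mul_mul_transpose _
  have hEE : (Emat p q)ᵀ * Emat p q = 1 - Dmat p q := transpose_fromCols_one_zero_mul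
  rw [hblock,
    mul_transpose_mul_transpose_mul_inv_mul_eq C C₁₁ (Emat p q) hC hC₁₁ hE hEC,
    Matrix.mul_assoc C, hEE, Matrix.mul_sub, Matrix.mul_one, Matrix.sub_mul,
    mul_nonsing_inv _ hC, sub_mulVec, one_mulVec, sub_sub_cancel]

/-- Cholesky form of the refined estimator:
`θ̂ − Σ Eᵀ Σ₁₁⁻¹ E θ̂ = C D C⁻¹ θ̂` where `Σ = C Cᵀ` and `Σ₁₁` is its top-left block. -/
theorem refined_eq_cholesky_form (p q : ℕ) (hp : 0 < p) (hq : 0 < q)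
    (C₁₁ : Matrix (Fin p) (Fin p) ℝ) (C₂₁ : Matrix (Fin q) (Fin p) ℝ)
    (C₂₂ : Matrix (Fin q) (Fin q) ℝ)
    (hC₁₁ : IsUnit C₁₁.det) (hC₂₂ : IsUnit C₂₂.det)
    (θhat : Fin p ⊕ Fin q → ℝ) :
    θhat - (Cmat C₁₁ C₂₁ C₂₂ * (Cmat C₁₁ C₂₁ C₂₂)ᵀ * (Emat p q)ᵀ *
        ((Cmat C₁₁ C₂₁ C₂₂ * (Cmat C₁₁ C₂₁ C₂₂)ᵀ).toBlocks₁₁)⁻¹ * Emat p q) *ᵥ θhat =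
      (Cmat C₁₁ C₂₁ C₂₂ * Dmat p q * (Cmat C₁₁ C₂₁ C₂₂)⁻¹) *ᵥ θhat :=
  refined_eq_cholesky_form_general p q C₁₁ C₂₁ C₂₂ hC₁₁ hC₂₂ θhat
end

section
/- Pythagorean decomposition in the Σ⁻¹ inner product: for every θ̂ ∈ ℝⁿ and every θ ∈ ℝⁿ with E θ = 0, writing θ̃ = C D C⁻¹ θ̂, one has (θ̂ − θ)ᵀ Σ⁻¹ (θ̂ − θ) = (θ̂ − θ̃)ᵀ Σ⁻¹ (θ̂ − θ̃) + (θ̃ − θ)ᵀ Σ⁻¹ (θ̃ − θ). -/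
open Matrix

/-!
Since `Σ⁻¹ = C⁻ᵀ C⁻¹`, whitening by `C⁻¹` turns the `Σ⁻¹` inner product into the dot product,
and `θ̃` into `D x` with `x = C⁻¹ θ̂`. As `C` is block lower triangular, `E C⁻¹ = C₁₁⁻¹ E`, so
`y = C⁻¹ θ` still has vanishing first block, i.e. lies in the range of the orthogonal projection
`D`. Then `x - D x ⟂ D x - y`, and the identity is Pythagoras for `x - y`.
-/

section Mahalanobis

variable {n R : Type*} [Fintype n] [CommRing R]

theorem dotProduct_mul_transpose_inv_mulVec [DecidableEq n] (C : Matrix n n R) (a b : n → R) :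
    a ⬝ᵥ ((C * Cᵀ)⁻¹ *ᵥ b) = (C⁻¹ *ᵥ a) ⬝ᵥ (C⁻¹ *ᵥ b) := by
  rw [Matrix.mul_inv_rev, ← transpose_nonsing_inv, ← mulVec_mulVec, dotProduct_mulVec,
    vecMul_transpose]

theorem sub_dotProduct_sub_eq_add_of_dotProduct_eq_zero {x y z : n → R}
    (h : (x - z) ⬝ᵥ (z - y) = 0) :
    (x - y) ⬝ᵥ (x - y) = (x - z) ⬝ᵥ (x - z) + (z - y) ⬝ᵥ (z - y) := by
  rw [← sub_add_sub_cancel x z y, add_dotProduct, dotProduct_add, dotProduct_add,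
    dotProduct_comm (z - y), h]
  ring

theorem sub_mulVec_dotProduct_mulVec_sub_eq_zero {D : Matrix n n R} (hD : D * D = D)
    (hDT : Dᵀ = D) (x : n → R) {y : n → R} (hy : D *ᵥ y = y) :
    (x - D *ᵥ x) ⬝ᵥ (D *ᵥ x - y) = 0 := by
  have hvecMul : (x - D *ᵥ x) ᵥ* D = D *ᵥ (x - D *ᵥ x) := by
    simpa only [hDT] using vecMul_transpose D (x - D *ᵥ x)
  rw [← hy, ← mulVec_sub, dotProduct_mulVec, hvecMul, mulVec_sub, mulVec_mulVec, hD,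
    sub_self, zero_dotProduct]

end Mahalanobis

section Blocks

variable {p q : ℕ}

theorem Dmat_mul_self : Dmat p q * Dmat p q = Dmat p q := by
  simp [Dmat, fromBlocks_multiply]

theorem Dmat_transpose : (Dmat p q)ᵀ = Dmat p q := by
  simp [Dmat, fromBlocks_transpose]

theorem Dmat_eq_one_sub : Dmat p q = 1 - (Emat p q)ᵀ * Emat p q := by
  ext (i | i) (j | j) <;> simp [Dmat, Emat, one_apply, eq_comm]

theorem Dmat_mulVec_of_Emat_mulVec_eq_zero {y : Fin p ⊕ Fin q → ℝ}
    (hy : Emat p q *ᵥ y = 0) : Dmat p q *ᵥ y = y := by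
  rw [Dmat_eq_one_sub, sub_mulVec, one_mulVec, ← mulVec_mulVec, hy, mulVec_zero, sub_zero]

variable (C₁₁ : Matrix (Fin p) (Fin p) ℝ) (C₂₁ : Matrix (Fin q) (Fin p) ℝ)
  (C₂₂ : Matrix (Fin q) (Fin q) ℝ)

theorem isUnit_det_Cmat (hC₁₁ : IsUnit C₁₁.det) (hC₂₂ : IsUnit C₂₂.det) :
    IsUnit (Cmat C₁₁ C₂₁ C₂₂).det := by
  rw [Cmat, det_fromBlocks_zero₁₂]
  exact hC₁₁.mul hC₂₂

theorem Emat_mul_Cmat : Emat p q * Cmat C₁₁ C₂₁ C₂₂ = C₁₁ * Emat p q := by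
  simp [Emat, Cmat, fromCols_mul_fromBlocks]

theorem Emat_mul_inv_Cmat (hC₁₁ : IsUnit C₁₁.det) (hC₂₂ : IsUnit C₂₂.det) :
    Emat p q * (Cmat C₁₁ C₂₁ C₂₂)⁻¹ = C₁₁⁻¹ * Emat p q := by
  have hC := isUnit_det_Cmat C₁₁ C₂₁ C₂₂ hC₁₁ hC₂₂
  calc Emat p q * (Cmat C₁₁ C₂₁ C₂₂)⁻¹
      = C₁₁⁻¹ * C₁₁ * Emat p q * (Cmat C₁₁ C₂₁ C₂₂)⁻¹ := by
        rw [nonsing_inv_mul _ hC₁₁, Matrix.one_mul]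
    _ = C₁₁⁻¹ * (Emat p q * Cmat C₁₁ C₂₁ C₂₂) * (Cmat C₁₁ C₂₁ C₂₂)⁻¹ := by
        rw [Emat_mul_Cmat, Matrix.mul_assoc C₁₁⁻¹]
    _ = C₁₁⁻¹ * Emat p q := by
        rw [Matrix.mul_assoc, Matrix.mul_assoc, mul_nonsing_inv _ hC, Matrix.mul_one]

end Blocks

theorem pythagorean_decomposition_general (p q : ℕ)
    (C₁₁ : Matrix (Fin p) (Fin p) ℝ) (C₂₁ : Matrix (Fin q) (Fin p) ℝ)
    (C₂₂ : Matrix (Fin q) (Fin q) ℝ)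
    (hC₁₁ : IsUnit C₁₁.det) (hC₂₂ : IsUnit C₂₂.det)
    (θhat θ : Fin p ⊕ Fin q → ℝ) (hθ : Emat p q *ᵥ θ = 0) :
    (θhat - θ) ⬝ᵥ ((Cmat C₁₁ C₂₁ C₂₂ * (Cmat C₁₁ C₂₁ C₂₂)ᵀ)⁻¹ *ᵥ (θhat - θ)) =
      (θhat - (Cmat C₁₁ C₂₁ C₂₂ * Dmat p q * (Cmat C₁₁ C₂₁ C₂₂)⁻¹) *ᵥ θhat) ⬝ᵥ
        ((Cmat C₁₁ C₂₁ C₂₂ * (Cmat C₁₁ C₂₁ C₂₂)ᵀ)⁻¹ *ᵥ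
          (θhat - (Cmat C₁₁ C₂₁ C₂₂ * Dmat p q * (Cmat C₁₁ C₂₁ C₂₂)⁻¹) *ᵥ θhat)) +
      ((Cmat C₁₁ C₂₁ C₂₂ * Dmat p q * (Cmat C₁₁ C₂₁ C₂₂)⁻¹) *ᵥ θhat - θ) ⬝ᵥ
        ((Cmat C₁₁ C₂₁ C₂₂ * (Cmat C₁₁ C₂₁ C₂₂)ᵀ)⁻¹ *ᵥ
          ((Cmat C₁₁ C₂₁ C₂₂ * Dmat p q * (Cmat C₁₁ C₂₁ C₂₂)⁻¹) *ᵥ θhat - θ)) := by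
  set C := Cmat C₁₁ C₂₁ C₂₂
  have hC : IsUnit C.det := isUnit_det_Cmat C₁₁ C₂₁ C₂₂ hC₁₁ hC₂₂
  have hθtilde : C⁻¹ *ᵥ ((C * Dmat p q * C⁻¹) *ᵥ θhat) = Dmat p q *ᵥ (C⁻¹ *ᵥ θhat) := by
    rw [mulVec_mulVec, mulVec_mulVec, ← mul_assoc, ← mul_assoc, nonsing_inv_mul _ hC, one_mul]
  have hθrange : Dmat p q *ᵥ (C⁻¹ *ᵥ θ) = C⁻¹ *ᵥ θ := by
    refine Dmat_mulVec_of_Emat_mulVec_eq_zero ?_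
    rw [mulVec_mulVec, Emat_mul_inv_Cmat C₁₁ C₂₁ C₂₂ hC₁₁ hC₂₂, ← mulVec_mulVec, hθ,
      mulVec_zero]
  simp only [dotProduct_mul_transpose_inv_mulVec]
  rw [mulVec_sub, mulVec_sub, mulVec_sub, hθtilde]
  exact sub_dotProduct_sub_eq_add_of_dotProduct_eq_zero
    (sub_mulVec_dotProduct_mulVec_sub_eq_zero Dmat_mul_self Dmat_transpose _ hθrange)

/-- Pythagorean decomposition in the `Σ⁻¹` inner product, with `θ̃ = C D C⁻¹ θ̂`
and `Σ = C Cᵀ`. -/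
theorem pythagorean_decomposition (p q : ℕ) (hp : 0 < p) (hq : 0 < q)
    (C₁₁ : Matrix (Fin p) (Fin p) ℝ) (C₂₁ : Matrix (Fin q) (Fin p) ℝ)
    (C₂₂ : Matrix (Fin q) (Fin q) ℝ)
    (hC₁₁ : IsUnit C₁₁.det) (hC₂₂ : IsUnit C₂₂.det)
    (θhat θ : Fin p ⊕ Fin q → ℝ) (hθ : Emat p q *ᵥ θ = 0) :
    (θhat - θ) ⬝ᵥ ((Cmat C₁₁ C₂₁ C₂₂ * (Cmat C₁₁ C₂₁ C₂₂)ᵀ)⁻¹ *ᵥ (θhat - θ)) =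
      (θhat - (Cmat C₁₁ C₂₁ C₂₂ * Dmat p q * (Cmat C₁₁ C₂₁ C₂₂)⁻¹) *ᵥ θhat) ⬝ᵥ
        ((Cmat C₁₁ C₂₁ C₂₂ * (Cmat C₁₁ C₂₁ C₂₂)ᵀ)⁻¹ *ᵥ
          (θhat - (Cmat C₁₁ C₂₁ C₂₂ * Dmat p q * (Cmat C₁₁ C₂₁ C₂₂)⁻¹) *ᵥ θhat)) +
      ((Cmat C₁₁ C₂₁ C₂₂ * Dmat p q * (Cmat C₁₁ C₂₁ C₂₂)⁻¹) *ᵥ θhat - θ) ⬝ᵥ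
        ((Cmat C₁₁ C₂₁ C₂₂ * (Cmat C₁₁ C₂₁ C₂₂)ᵀ)⁻¹ *ᵥ
          ((Cmat C₁₁ C₂₁ C₂₂ * Dmat p q * (Cmat C₁₁ C₂₁ C₂₂)⁻¹) *ᵥ θhat - θ)) :=
  pythagorean_decomposition_general p q C₁₁ C₂₁ C₂₂ hC₁₁ hC₂₂ θhat θ hθ
end

section
/- Matrix analogue of Theorem 2 (enforcing a larger relative degree improves accuracy): let C be an invertible n×n real matrix, Σ = C Cᵀ, and for a 0/1 diagonal n×n matrix D let P_D = C D C⁻¹. If D₁ and D₂ are 0/1 diagonal matrices with D₂ ≤ D₁ entrywise on the diagonal (D₂ has zeros in at least all the positions where D₁ does), then P_{D₂} Σ P_{D₂}ᵀ ⪯ P_{D₁} Σ P_{D₁}ᵀ in the positive semidefinite (Loewner) order, i.e. P_{D₁} Σ P_{D₁}ᵀ − P_{D₂} Σ P_{D₂}ᵀ is positive semidefinite. -/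
/-!
Since `Dᵀ = D`, the covariance `P_D Σ P_Dᵀ = C D C⁻¹ C Cᵀ C⁻ᵀ D Cᵀ` collapses to
`C D Cᵀ` once `D` is idempotent. The difference of the two covariances is therefore the
congruence `C (D₁ - D₂) Cᵀ` of a diagonal matrix with nonnegative entries.
-/

open Matrix

theorem isIdempotentElem_of_forall_eq_zero_or_one {ι R : Type*} [MulZeroOneClass R]
    {d : ι → R} (hd : ∀ i, d i = 0 ∨ d i = 1) : IsIdempotentElem d :=
  funext fun i => by rcases hd i with h | h <;> simp [h]

variable {m R : Type*} [Fintype m] [DecidableEq m]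

theorem Matrix.conj_mul_self_mul_transpose_mul_conj_transpose [CommRing R]
    {C : Matrix m m R} (hC : IsUnit C.det) (D : Matrix m m R) :
    (C * D * C⁻¹) * (C * Cᵀ) * (C * D * C⁻¹)ᵀ = C * (D * Dᵀ) * Cᵀ := by
  have hCinv : C⁻¹ * C = 1 := nonsing_inv_mul C hC
  have hCinvT : Cᵀ * C⁻¹ᵀ = 1 := by rw [← transpose_mul, hCinv, transpose_one]
  calc (C * D * C⁻¹) * (C * Cᵀ) * (C * D * C⁻¹)ᵀ
      = C * D * (C⁻¹ * C) * (Cᵀ * C⁻¹ᵀ) * Dᵀ * Cᵀ := by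
        simp only [transpose_mul, Matrix.mul_assoc]
    _ = C * (D * Dᵀ) * Cᵀ := by
        rw [hCinv, hCinvT, Matrix.mul_one, Matrix.mul_one, Matrix.mul_assoc C]

theorem Matrix.diagonal_mul_transpose_self_of_isIdempotentElem [CommSemiring R] {d : m → R}
    (hd : IsIdempotentElem d) : diagonal d * (diagonal d)ᵀ = diagonal d := by
  rw [diagonal_transpose, diagonal_mul_diagonal]
  exact congrArg diagonal hd

theorem Matrix.PosSemidef.mul_diagonal_mul_transpose {C : Matrix m m ℝ} {d : m → ℝ}
    (hd : 0 ≤ d) : (C * diagonal d * Cᵀ).PosSemidef := by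
  simpa only [conjTranspose_eq_transpose_of_trivial] using
    (posSemidef_diagonal_iff.mpr hd).mul_mul_conjTranspose_same C

/-- Matrix analogue of "enforcing a larger relative degree improves accuracy":
for an invertible `C`, `Σ = C Cᵀ`, and 0/1 diagonal matrices `D₁ᵈ, D₂ᵈ` with the
diagonal of `D₂ᵈ` entrywise below that of `D₁ᵈ`, setting `P_D = C D C⁻¹` one has
`P_{D₂} Σ P_{D₂}ᵀ ⪯ P_{D₁} Σ P_{D₁}ᵀ` in the Loewner order. -/
theorem larger_relative_degree_improves (n : ℕ) (C : Matrix (Fin n) (Fin n) ℝ)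
    (hC : IsUnit C.det) (d₁ d₂ : Fin n → ℝ)
    (hd₁ : ∀ i, d₁ i = 0 ∨ d₁ i = 1) (hd₂ : ∀ i, d₂ i = 0 ∨ d₂ i = 1)
    (hle : ∀ i, d₂ i ≤ d₁ i) :
    ((C * Matrix.diagonal d₁ * C⁻¹) * (C * Cᵀ) * (C * Matrix.diagonal d₁ * C⁻¹)ᵀ -
      (C * Matrix.diagonal d₂ * C⁻¹) * (C * Cᵀ) *
        (C * Matrix.diagonal d₂ * C⁻¹)ᵀ).PosSemidef := by
  rw [conj_mul_self_mul_transpose_mul_conj_transpose hC,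
    conj_mul_self_mul_transpose_mul_conj_transpose hC,
    diagonal_mul_transpose_self_of_isIdempotentElem
      (isIdempotentElem_of_forall_eq_zero_or_one hd₁),
    diagonal_mul_transpose_self_of_isIdempotentElem
      (isIdempotentElem_of_forall_eq_zero_or_one hd₂),
    ← Matrix.sub_mul, ← Matrix.mul_sub, diagonal_sub]
  exact PosSemidef.mul_diagonal_mul_transpose fun i => sub_nonneg.mpr (hle i)
end

section
/- Matrix form of the asymptotic covariance relation [AsCov(θ̃ − θ₀)]⁻¹ = T [AsCov(θ̂ − θ₀)]⁻¹ Tᵀ: with T = [0 I_q] the q×n matrix selecting the last q coordinates, P = C D C⁻¹, and Σ = C Cᵀ, one has T (P Σ Pᵀ) Tᵀ = (T Σ⁻¹ Tᵀ)⁻¹; equivalently, both sides equal C₂₂ C₂₂ᵀ. -/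
open Matrix

/-- The `q × (p+q)` matrix `T = [0 I_q]` selecting the last `q` coordinates. -/
def Tmat (p q : ℕ) : Matrix (Fin q) (Fin p ⊕ Fin q) ℝ :=
  Matrix.fromCols 0 1

/-!
Since `Σ = C Cᵀ`, the covariance `P Σ Pᵀ` collapses to `C D Cᵀ`, whose lower right block is
`C₂₂ C₂₂ᵀ` because `C` is block lower triangular. On the other side `Σ⁻¹ = C⁻ᵀ C⁻¹`, where
`C⁻¹` is again block lower triangular with lower right block `C₂₂⁻¹`, so the lower right
block of `Σ⁻¹` is `C₂₂⁻ᵀ C₂₂⁻¹ = (C₂₂ C₂₂ᵀ)⁻¹`.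
-/

namespace Matrix

variable {m n R : Type*} [Fintype m] [Fintype n] [CommRing R]

theorem conj_mul_mul_self_transpose_mul_conj_transpose [DecidableEq n] {A : Matrix n n R}
    (hA : IsUnit A.det) (B : Matrix n n R) :
    A * B * A⁻¹ * (A * Aᵀ) * (A * B * A⁻¹)ᵀ = A * (B * Bᵀ) * Aᵀ := by
  have hAt : IsUnit Aᵀ.det := by rwa [det_transpose]
  simp only [transpose_mul, Matrix.mul_assoc, transpose_nonsing_inv]
  rw [mul_nonsing_inv_cancel_left _ _ hAt, nonsing_inv_mul_cancel_left _ _ hA]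

theorem toBlocks₂₂_fromBlocks_zero₁₂_mul_projection_mul_transpose [DecidableEq n]
    (A : Matrix m m R) (C : Matrix n m R) (D : Matrix n n R) :
    (fromBlocks A 0 C D * fromBlocks 0 0 0 1 * (fromBlocks A 0 C D)ᵀ).toBlocks₂₂ = D * Dᵀ := by
  simp [fromBlocks_transpose, fromBlocks_multiply]

theorem toBlocks₂₂_transpose_mul_self_fromBlocks_zero₁₂ (A : Matrix m m R) (C : Matrix n m R)
    (D : Matrix n n R) :
    ((fromBlocks A 0 C D)ᵀ * fromBlocks A 0 C D).toBlocks₂₂ = Dᵀ * D := by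
  simp [fromBlocks_transpose, fromBlocks_multiply]

theorem toBlocks₂₂_inv_mul_self_transpose_fromBlocks_zero₁₂ [DecidableEq m] [DecidableEq n]
    {A : Matrix m m R} (hA : IsUnit A) (C : Matrix n m R) {D : Matrix n n R} (hD : IsUnit D) :
    (fromBlocks A 0 C D * (fromBlocks A 0 C D)ᵀ)⁻¹.toBlocks₂₂ = (D * Dᵀ)⁻¹ := by
  rw [mul_inv_rev, ← transpose_nonsing_inv,
    inv_fromBlocks_zero₁₂_of_isUnit_iff _ _ _ (iff_of_true hA hD),
    toBlocks₂₂_transpose_mul_self_fromBlocks_zero₁₂, mul_inv_rev, transpose_nonsing_inv]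

end Matrix

theorem Dmat_mul_transpose_self (p q : ℕ) : Dmat p q * (Dmat p q)ᵀ = Dmat p q := by
  simp [Dmat, fromBlocks_transpose, fromBlocks_multiply]

theorem Tmat_mul_mul_transpose {p q : ℕ} (M : Matrix (Fin p ⊕ Fin q) (Fin p ⊕ Fin q) ℝ) :
    Tmat p q * M * (Tmat p q)ᵀ = M.toBlocks₂₂ := by
  ext i j
  simp [Tmat, fromCols, mul_apply, Fintype.sum_sum_type, toBlocks₂₂, one_apply]

theorem ascov_relation_general (p q : ℕ)
    (C₁₁ : Matrix (Fin p) (Fin p) ℝ) (C₂₁ : Matrix (Fin q) (Fin p) ℝ)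
    (C₂₂ : Matrix (Fin q) (Fin q) ℝ)
    (hC₁₁ : IsUnit C₁₁.det) (hC₂₂ : IsUnit C₂₂.det) :
    Tmat p q * ((Cmat C₁₁ C₂₁ C₂₂ * Dmat p q * (Cmat C₁₁ C₂₁ C₂₂)⁻¹) *
          (Cmat C₁₁ C₂₁ C₂₂ * (Cmat C₁₁ C₂₁ C₂₂)ᵀ) *
          (Cmat C₁₁ C₂₁ C₂₂ * Dmat p q * (Cmat C₁₁ C₂₁ C₂₂)⁻¹)ᵀ) * (Tmat p q)ᵀ =
        (Tmat p q * (Cmat C₁₁ C₂₁ C₂₂ * (Cmat C₁₁ C₂₁ C₂₂)ᵀ)⁻¹ * (Tmat p q)ᵀ)⁻¹ ∧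
    Tmat p q * ((Cmat C₁₁ C₂₁ C₂₂ * Dmat p q * (Cmat C₁₁ C₂₁ C₂₂)⁻¹) *
          (Cmat C₁₁ C₂₁ C₂₂ * (Cmat C₁₁ C₂₁ C₂₂)ᵀ) *
          (Cmat C₁₁ C₂₁ C₂₂ * Dmat p q * (Cmat C₁₁ C₂₁ C₂₂)⁻¹)ᵀ) * (Tmat p q)ᵀ =
        C₂₂ * C₂₂ᵀ := by
  have hu₁₁ : IsUnit C₁₁ := (isUnit_iff_isUnit_det _).mpr hC₁₁
  have hu₂₂ : IsUnit C₂₂ := (isUnit_iff_isUnit_det _).mpr hC₂₂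
  have hC : IsUnit (Cmat C₁₁ C₂₁ C₂₂).det :=
    (isUnit_iff_isUnit_det _).mp (isUnit_fromBlocks_zero₁₂.mpr ⟨hu₁₁, hu₂₂⟩)
  have hcov : Tmat p q * ((Cmat C₁₁ C₂₁ C₂₂ * Dmat p q * (Cmat C₁₁ C₂₁ C₂₂)⁻¹) *
      (Cmat C₁₁ C₂₁ C₂₂ * (Cmat C₁₁ C₂₁ C₂₂)ᵀ) *
      (Cmat C₁₁ C₂₁ C₂₂ * Dmat p q * (Cmat C₁₁ C₂₁ C₂₂)⁻¹)ᵀ) * (Tmat p q)ᵀ = C₂₂ * C₂₂ᵀ := by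
    rw [conj_mul_mul_self_transpose_mul_conj_transpose hC, Dmat_mul_transpose_self,
      Tmat_mul_mul_transpose]
    exact toBlocks₂₂_fromBlocks_zero₁₂_mul_projection_mul_transpose C₁₁ C₂₁ C₂₂
  have hprec : Tmat p q * (Cmat C₁₁ C₂₁ C₂₂ * (Cmat C₁₁ C₂₁ C₂₂)ᵀ)⁻¹ * (Tmat p q)ᵀ =
      (C₂₂ * C₂₂ᵀ)⁻¹ := by
    rw [Tmat_mul_mul_transpose]
    exact toBlocks₂₂_inv_mul_self_transpose_fromBlocks_zero₁₂ hu₁₁ C₂₁ hu₂₂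
  have hdet : IsUnit (C₂₂ * C₂₂ᵀ).det := by
    rw [det_mul, det_transpose]
    exact hC₂₂.mul hC₂₂
  exact ⟨by rw [hcov, hprec, nonsing_inv_nonsing_inv _ hdet], hcov⟩

/-- Matrix form of the asymptotic covariance relation: with `P = C D C⁻¹` and
`Σ = C Cᵀ`, one has `T (P Σ Pᵀ) Tᵀ = (T Σ⁻¹ Tᵀ)⁻¹`, and both sides equal
`C₂₂ C₂₂ᵀ`. -/
theorem ascov_relation (p q : ℕ) (hp : 0 < p) (hq : 0 < q)
    (C₁₁ : Matrix (Fin p) (Fin p) ℝ) (C₂₁ : Matrix (Fin q) (Fin p) ℝ)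
    (C₂₂ : Matrix (Fin q) (Fin q) ℝ)
    (hC₁₁ : IsUnit C₁₁.det) (hC₂₂ : IsUnit C₂₂.det) :
    Tmat p q * ((Cmat C₁₁ C₂₁ C₂₂ * Dmat p q * (Cmat C₁₁ C₂₁ C₂₂)⁻¹) *
          (Cmat C₁₁ C₂₁ C₂₂ * (Cmat C₁₁ C₂₁ C₂₂)ᵀ) *
          (Cmat C₁₁ C₂₁ C₂₂ * Dmat p q * (Cmat C₁₁ C₂₁ C₂₂)⁻¹)ᵀ) * (Tmat p q)ᵀ =
        (Tmat p q * (Cmat C₁₁ C₂₁ C₂₂ * (Cmat C₁₁ C₂₁ C₂₂)ᵀ)⁻¹ * (Tmat p q)ᵀ)⁻¹ ∧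
    Tmat p q * ((Cmat C₁₁ C₂₁ C₂₂ * Dmat p q * (Cmat C₁₁ C₂₁ C₂₂)⁻¹) *
          (Cmat C₁₁ C₂₁ C₂₂ * (Cmat C₁₁ C₂₁ C₂₂)ᵀ) *
          (Cmat C₁₁ C₂₁ C₂₂ * Dmat p q * (Cmat C₁₁ C₂₁ C₂₂)⁻¹)ᵀ) * (Tmat p q)ᵀ =
        C₂₂ * C₂₂ᵀ :=
  ascov_relation_general p q C₁₁ C₂₁ C₂₂ hC₁₁ hC₂₂
end
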